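/- If a symmetric positive definite matrix J = D − R (D diagonal with positive entries, R having zero diagonal) is walk-summable, i.e. ρ(D^{-1/2} |R| D^{-1/2}) < 1, then J is invertible and J^{-1} = D^{-1/2} (∑_{k≥0} (D^{-1/2} R D^{-1/2})^k) D^{-1/2}. -/

import Mathlib

open Matrix

theorem walk_summable_inverse (n : ℕ) (d : Fin n → ℝ) (hd : ∀ i, 0 < d i)
    (R : Matrix (Fin n) (Fin n) ℝ) (hRdiag : ∀ i, R i i = 0)
    (J : Matrix (Fin n) (Fin n) ℝ) (hJ : J = Matrix.diagonal d - R)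
    (hsym : J.IsSymm) (hpd : J.PosDef)
    (S : Matrix (Fin n) (Fin n) ℝ)
    (hS : S = Matrix.diagonal fun i => 1 / Real.sqrt (d i))
    (hρ : spectralRadius ℝ (S * (R.map fun a => |a|) * S) < 1) :
    IsUnit J ∧
      J⁻¹ = S * (∑' k : ℕ, (S * R * S) ^ k) * S := by
  set s : Fin n → ℝ := fun i => 1 / Real.sqrt (d i) with hs
  have hs_pos : ∀ i, 0 < s i := fun i => div_pos one_pos (Real.sqrt_pos.2 (hd i))
  set A : Matrix (Fin n) (Fin n) ℝ := S * R * S with hA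
  set B : Matrix (Fin n) (Fin n) ℝ := S * (R.map fun a => |a|) * S with hB
  -- entrywise formulas
  have hAe : ∀ i j, A i j = s i * R i j * s j := by
    intro i j
    rw [hA, hS, Matrix.mul_diagonal, Matrix.diagonal_mul]
  have hBe : ∀ i j, B i j = s i * |R i j| * s j := by
    intro i j
    rw [hB, hS, Matrix.mul_diagonal, Matrix.diagonal_mul, Matrix.map_apply]
  have habs : ∀ i j, |A i j| = B i j := by
    intro i j
    rw [hAe, hBe, abs_mul, abs_mul, abs_of_pos (hs_pos i), abs_of_pos (hs_pos j)]
  -- R is symmetric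
  have hRsymm : Rᵀ = R := by
    have := hsym
    rw [Matrix.IsSymm, hJ, Matrix.transpose_sub, Matrix.diagonal_transpose] at this
    exact sub_right_injective this
  -- B is hermitian
  have hBh : B.IsHermitian := by
    rw [Matrix.IsHermitian, Matrix.conjTranspose_eq_transpose_of_trivial, hB, hS]
    rw [Matrix.transpose_mul, Matrix.transpose_mul, Matrix.diagonal_transpose,
      ← Matrix.transpose_map, hRsymm, ← mul_assoc]
  -- eigen data
  set μ : Fin n → ℝ := hBh.eigenvalues with hμdef
  set U : Matrix (Fin n) (Fin n) ℝ := (hBh.eigenvectorUnitary : Matrix (Fin n) (Fin n) ℝ) with hU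
  have hUU : U * star U = 1 := Unitary.coe_mul_star_self _
  have hUU' : star U * U = 1 := Unitary.coe_star_mul_self _
  have hspec : B = U * Matrix.diagonal μ * star U := by
    have := hBh.spectral_theorem
    simpa [RCLike.ofReal_real_eq_id] using this
  -- |μ l| < 1
  have hμ : ∀ l, |μ l| < 1 := by
    intro l
    have hmem : μ l ∈ spectrum ℝ B := hBh.eigenvalues_mem_spectrum_real l
    have hle : (‖μ l‖₊ : ENNReal) ≤ spectralRadius ℝ B := by
      exact le_iSup₂ (f := fun k (_ : k ∈ spectrum ℝ B) => (‖k‖₊ : ENNReal)) (μ l) hmem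
    have hlt : (‖μ l‖₊ : ENNReal) < 1 := lt_of_le_of_lt hle hρ
    have : ‖μ l‖₊ < 1 := by exact_mod_cast hlt
    have : ‖μ l‖ < 1 := this
    rwa [Real.norm_eq_abs] at this
  -- entries of U are bounded by 1
  have hUb : ∀ i l, |U i l| ≤ 1 := by
    intro i l
    have h1 : (U * star U) i i = 1 := by rw [hUU]; simp [Matrix.one_apply]
    have h2 : ∑ m, U i m * U i m = 1 := by
      rw [Matrix.mul_apply] at h1
      simpa [Matrix.star_apply] using h1
    have h3 : U i l * U i l ≤ 1 := by
      rw [← h2]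
      exact Finset.single_le_sum (f := fun m => U i m * U i m)
        (fun m _ => mul_self_nonneg _) (Finset.mem_univ l)
    nlinarith [abs_nonneg (U i l), sq_abs (U i l)]
  -- powers of B
  have hBpow : ∀ k : ℕ, B ^ k = U * Matrix.diagonal (fun l => μ l ^ k) * star U := by
    intro k
    induction k with
    | zero => simp [hUU]
    | succ k ih =>
      rw [pow_succ, ih, hspec]
      rw [show U * Matrix.diagonal (fun l => μ l ^ k) * star U * (U * Matrix.diagonal μ * star U)
          = U * Matrix.diagonal (fun l => μ l ^ k) * (star U * U) * Matrix.diagonal μ * star U by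
        simp only [mul_assoc]]
      rw [hUU']
      simp only [mul_one, Matrix.diagonal_mul_diagonal, mul_assoc]
      have hfun : (fun i => μ i ^ k * μ i) = fun l => μ l ^ (k + 1) :=
        funext fun i => (pow_succ _ _).symm
      rw [hfun]
  -- bound on entries of B^k
  set c : ℕ → ℝ := fun k => ∑ l, |μ l| ^ k with hc
  have hBk : ∀ k i j, (B ^ k) i j ≤ c k := by
    intro k i j
    rw [hBpow k]
    have : (U * Matrix.diagonal (fun l => μ l ^ k) * star U) i j
        = ∑ l, U i l * μ l ^ k * U j l := by
      rw [Matrix.mul_apply]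
      congr 1
      ext l
      rw [Matrix.mul_diagonal, Matrix.star_apply]
      simp
    rw [this]
    calc ∑ l, U i l * μ l ^ k * U j l ≤ |∑ l, U i l * μ l ^ k * U j l| := le_abs_self _
      _ ≤ ∑ l, |U i l * μ l ^ k * U j l| := Finset.abs_sum_le_sum_abs _ _
      _ ≤ ∑ l, |μ l| ^ k := by
          apply Finset.sum_le_sum
          intro l _
          rw [abs_mul, abs_mul, abs_pow]
          calc |U i l| * |μ l| ^ k * |U j l| ≤ 1 * |μ l| ^ k * 1 := by
                apply mul_le_mul (mul_le_mul (hUb i l) le_rfl (by positivity) zero_le_one)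
                  (hUb j l) (abs_nonneg _) (by positivity)
            _ = |μ l| ^ k := by ring
  have hcs : Summable c := by
    exact summable_sum fun l _ => summable_geometric_of_lt_one (abs_nonneg _) (hμ l)
  -- entrywise bound on A^k
  have hAk : ∀ (k : ℕ) i j, |(A ^ k) i j| ≤ (B ^ k) i j := by
    intro k
    induction k with
    | zero =>
      intro i j
      simp [Matrix.one_apply]
      split <;> simp
    | succ k ih =>
      intro i j
      rw [pow_succ, pow_succ, Matrix.mul_apply, Matrix.mul_apply]
      calc |∑ l, (A ^ k) i l * A l j| ≤ ∑ l, |(A ^ k) i l * A l j| :=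
            Finset.abs_sum_le_sum_abs _ _
        _ ≤ ∑ l, (B ^ k) i l * B l j := by
            apply Finset.sum_le_sum
            intro l _
            rw [abs_mul, habs]
            exact mul_le_mul_of_nonneg_right (ih i l) ((habs l j) ▸ abs_nonneg _)
  have hAkc : ∀ (k : ℕ) i j, |(A ^ k) i j| ≤ c k := fun k i j =>
    le_trans (hAk k i j) (hBk k i j)
  -- summability of A^k
  have hsumA : Summable (fun k : ℕ => A ^ k) := by
    apply Pi.summable.2
    intro i
    rw [Pi.summable]
    intro j
    exact Summable.of_norm_bounded hcs (fun k => by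
      rw [Real.norm_eq_abs]; exact hAkc k i j)
  set T : Matrix (Fin n) (Fin n) ℝ := ∑' k : ℕ, A ^ k with hT
  have hHS : HasSum (fun k : ℕ => A ^ k) T := hsumA.hasSum
  -- A^N tends to 0
  have hA0 : Filter.Tendsto (fun N : ℕ => A ^ N) Filter.atTop (nhds 0) := by
    apply tendsto_pi_nhds.2
    intro i
    rw [tendsto_pi_nhds]
    intro j
    have : Filter.Tendsto c Filter.atTop (nhds 0) := hcs.tendsto_atTop_zero
    refine squeeze_zero_norm (fun k => ?_) this
    rw [Real.norm_eq_abs]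
    exact hAkc k i j
  -- telescoping sums
  have htel : ∀ N : ℕ, ∑ k ∈ Finset.range N, (A ^ k - A ^ (k + 1)) = 1 - A ^ N := by
    intro N
    have := Finset.sum_range_sub (fun k : ℕ => A ^ k) N
    calc ∑ k ∈ Finset.range N, (A ^ k - A ^ (k + 1))
        = -∑ k ∈ Finset.range N, (A ^ (k + 1) - A ^ k) := by
          rw [← Finset.sum_neg_distrib]
          congr 1
          ext k
          rw [neg_sub]
      _ = -(A ^ N - A ^ 0) := by rw [this]
      _ = 1 - A ^ N := by rw [neg_sub, pow_zero]
  have hlim1 : Filter.Tendsto (fun N : ℕ => ∑ k ∈ Finset.range N, (A ^ k - A ^ (k + 1)))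
      Filter.atTop (nhds 1) := by
    simp_rw [htel]
    have : Filter.Tendsto (fun N : ℕ => (1 : Matrix (Fin n) (Fin n) ℝ) - A ^ N)
        Filter.atTop (nhds (1 - 0)) := Filter.Tendsto.sub tendsto_const_nhds hA0
    simpa using this
  -- (1 - A) * T = 1
  have hmul : (1 - A) * T = 1 := by
    have h1 : HasSum (fun k : ℕ => (1 - A) * A ^ k) ((1 - A) * T) := hHS.mul_left _
    have h2 : (fun k : ℕ => (1 - A) * A ^ k) = fun k : ℕ => A ^ k - A ^ (k + 1) := by
      funext k
      rw [sub_mul, one_mul, pow_succ']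
    rw [h2] at h1
    exact tendsto_nhds_unique h1.tendsto_sum_nat hlim1
  have hmul' : T * (1 - A) = 1 := by
    have h1 : HasSum (fun k : ℕ => A ^ k * (1 - A)) (T * (1 - A)) := hHS.mul_right _
    have h2 : (fun k : ℕ => A ^ k * (1 - A)) = fun k : ℕ => A ^ k - A ^ (k + 1) := by
      funext k
      rw [mul_sub, mul_one, pow_succ]
    rw [h2] at h1
    exact tendsto_nhds_unique h1.tendsto_sum_nat hlim1
  -- relate J to 1 - A via S
  set E : Matrix (Fin n) (Fin n) ℝ := Matrix.diagonal (fun i => Real.sqrt (d i)) with hE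
  have hES : E * S = 1 := by
    have h1 : (fun i => Real.sqrt (d i) * s i) = fun _ => (1 : ℝ) := funext fun i => by
      have hne : Real.sqrt (d i) ≠ 0 := ne_of_gt (Real.sqrt_pos.2 (hd i))
      simp only [hs]
      field_simp
    rw [hE, hS, Matrix.diagonal_mul_diagonal, h1, Matrix.diagonal_one]
  have hSE : S * E = 1 := by
    have h1 : (fun i => s i * Real.sqrt (d i)) = fun _ => (1 : ℝ) := funext fun i => by
      have hne : Real.sqrt (d i) ≠ 0 := ne_of_gt (Real.sqrt_pos.2 (hd i))
      simp only [hs]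
      field_simp
    rw [hE, hS, Matrix.diagonal_mul_diagonal, h1, Matrix.diagonal_one]
  have hSJS : S * J * S = 1 - A := by
    have h1 : (fun i => s i * d i * s i) = fun _ => (1 : ℝ) := funext fun i => by
      have hne : Real.sqrt (d i) ≠ 0 := ne_of_gt (Real.sqrt_pos.2 (hd i))
      have h := Real.mul_self_sqrt (hd i).le
      simp only [hs]
      field_simp
      rw [Real.sq_sqrt (hd i).le]
    rw [hJ, Matrix.mul_sub, Matrix.sub_mul]
    congr 1
    rw [hS, Matrix.diagonal_mul_diagonal, Matrix.diagonal_mul_diagonal, h1,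
      Matrix.diagonal_one]
  have hJE : J = E * (1 - A) * E := by
    rw [← hSJS]
    symm
    calc E * (S * J * S) * E = (E * S) * J * (S * E) := by simp only [mul_assoc]
      _ = J := by rw [hES, hSE, one_mul, mul_one]
  have hright : J * (S * T * S) = 1 := by
    rw [hJE]
    calc E * (1 - A) * E * (S * T * S) = E * (1 - A) * (E * S) * (T * S) := by
          simp only [mul_assoc]
      _ = E * ((1 - A) * T) * S := by rw [hES]; simp only [mul_one, one_mul, mul_assoc]
      _ = 1 := by rw [hmul, mul_one, hES]
  refine ⟨?_, ?_⟩
  · exact (Matrix.isUnit_iff_isUnit_det J).2 (Matrix.isUnit_det_of_right_inverse hright)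
  · exact Matrix.inv_eq_right_inv hright
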